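/- arXiv:1608.03680 — 3 statements merged into one kernel-verified Lean document; each statement's English description precedes it below -/
import Mathlib

section
/- Let W*₀ be the smallest value in 𝒲 = {W(y|x) : x,y ∈ ℝ², dist(x,y) ≥ R} such that I(W*₀) is nonempty. Then a point x is a (1|1)_R-centroid (i.e., minimizes W*) if and only if x ∈ I(W*₀). -/
open scoped RealInnerProductSpace

noncomputable section

/-- The Euclidean plane. -/
abbrev Plane := EuclideanSpace ℝ (Fin 2)

/-- The point of the plane with coordinates `(a, b)`. -/
def pt (a b : ℝ) : Plane := (WithLp.equiv 2 (Fin 2 → ℝ)).symm ![a, b]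

/-- `Wcap V w x y` = total weight of customers in `V` strictly closer to `y` than to `x`. -/
def Wcap (V : Finset Plane) (w : Plane → ℝ) (x y : Plane) : ℝ :=
  ∑ v ∈ V, if dist v y < dist v x then w v else 0

/-- `Wstar V w R x` = the weight loss of `x`: the supremum of captures over feasible
follower positions `y` with `dist x y ≥ R`. -/
def Wstar (V : Finset Plane) (w : Plane → ℝ) (R : ℝ) (x : Plane) : ℝ :=
  sSup (Wcap V w x '' {y : Plane | R ≤ dist x y})

/-- Unit direction of polar angle `θ`. -/
def dir (θ : ℝ) : Plane := pt (Real.cos θ) (Real.sin θ)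

/-- `Wang V w R x θ` = capture of the follower placed at `x + R•(cos θ, sin θ)` against `x`. -/
def Wang (V : Finset Plane) (w : Plane → ℝ) (R : ℝ) (x : Plane) (θ : ℝ) : ℝ :=
  Wcap V w x (x + R • dir θ)

/-- The weight loss of `x`, as the supremum of captures over the circle of radius `R`. -/
def WstarC (V : Finset Plane) (w : Plane → ℝ) (R : ℝ) (x : Plane) : ℝ :=
  sSup (Set.range (Wang V w R x))

/-- The intersection `I(W₀)` of the convex hulls `CH(𝒞(S))` over subsets `S ⊆ V`
with `W(S) ≥ W₀`. -/
def Iset (V : Finset Plane) (w : Plane → ℝ) (R W₀ : ℝ) : Set Plane :=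
  ⋂ S ∈ {S : Finset Plane | S ⊆ V ∧ W₀ ≤ ∑ v ∈ S, w v},
    convexHull ℝ (⋃ v ∈ S, Metric.closedBall v (R / 2))

/-!
Everything rests on the identity `I(W') = {x | W*(x) < W'}`. A follower `y` with
`dist x y ≥ R` captures `v` iff `v` lies beyond the perpendicular bisector of `x y`, an open
half-plane at distance at least `R / 2` from `x`; so if `y` captures all of `S`, this half-plane
contains `CH(𝒞(S))` and misses `x`. Conversely, if `x ∉ CH(𝒞(S))`, Hahn–Banach separates `x`
from this closed convex set with margin `R / 2`, and the follower at distance `R` in the normal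
direction captures all of `S`. Since `W*` is attained, every `W*(x)` is an attainable value, and
the minimality of `W*₀` then says exactly that `I(W*₀) = {x | W*(x) < W*₀}` is the set of
minimisers of `W*`.
-/

open Metric

section InnerProductSpace

variable {E : Type*} [NormedAddCommGroup E] [InnerProductSpace ℝ E]

theorem dist_lt_dist_iff_inner_sub {v x y : E} :
    dist v y < dist v x ↔ ‖y - x‖ ^ 2 / 2 < ⟪y - x, v - x⟫ := by
  have hsq : dist v y ^ 2 = dist v x ^ 2 - 2 * ⟪y - x, v - x⟫ + ‖y - x‖ ^ 2 := by
    rw [dist_eq_norm, dist_eq_norm, show v - y = (v - x) - (y - x) by abel, norm_sub_sq_real,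
      real_inner_comm]
  rw [← sq_lt_sq₀ dist_nonneg dist_nonneg, hsq]
  constructor <;> intro h <;> linarith

theorem convexHull_biUnion_closedBall (S : Finset E) {r : ℝ} (hr : 0 ≤ r) :
    convexHull ℝ (⋃ v ∈ S, closedBall v r) = cthickening r (convexHull ℝ (S : Set E)) := by
  have hS : IsCompact (S : Set E) := S.finite_toSet.isCompact
  rw [← Finset.set_biUnion_coe, ← hS.cthickening_eq_biUnion_closedBall hr,
    ← hS.add_closedBall_zero hr, convexHull_add, (convex_closedBall _ _).convexHull_eq,
    (S.finite_toSet.isCompact_convexHull ℝ).add_closedBall_zero hr]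

theorem notMem_convexHull_biUnion_closedBall {R : ℝ} (hR : 0 < R) {x y : E}
    (hy : R ≤ dist x y) {T : Finset E} (hT : ∀ v ∈ T, dist v y < dist v x) :
    x ∉ convexHull ℝ (⋃ v ∈ T, closedBall v (R / 2)) := by
  set u := y - x
  have hu : R ≤ ‖u‖ := by rwa [dist_comm, dist_eq_norm] at hy
  have hsub : ⋃ v ∈ T, closedBall v (R / 2) ⊆ {p | ⟪u, x⟫ < ⟪u, p⟫} := by
    simp only [Set.iUnion_subset_iff]
    intro v hv p hp
    have hcap := dist_lt_dist_iff_inner_sub.mp (hT v hv)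
    have hball : |⟪u, p - v⟫| ≤ ‖u‖ * (R / 2) :=
      (abs_real_inner_le_norm u (p - v)).trans
        (mul_le_mul_of_nonneg_left (by rwa [← dist_eq_norm]) (norm_nonneg u))
    have hsplit : ⟪u, p⟫ - ⟪u, x⟫ = ⟪u, v - x⟫ + ⟪u, p - v⟫ := by
      rw [← inner_sub_right, ← inner_add_right, sub_add_sub_cancel']
    change ⟪u, x⟫ < ⟪u, p⟫
    nlinarith [neg_abs_le ⟪u, p - v⟫]
  intro hx
  exact lt_irrefl ⟪u, x⟫
    (convexHull_min hsub (convex_halfSpace_gt (innerₛₗ ℝ u).isLinear _) hx)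

theorem exists_norm_eq_one_lt_inner_of_notMem_cthickening [CompleteSpace E] {K : Set E}
    (hK : Convex ℝ K) (hKne : K.Nonempty) {r : ℝ} (hr : 0 ≤ r) {x : E}
    (hx : x ∉ cthickening r K) :
    ∃ e : E, ‖e‖ = 1 ∧ ∀ q ∈ K, r < ⟪e, q - x⟫ := by
  obtain ⟨f, c, hfx, hfC⟩ :=
    geometric_hahn_banach_point_closed (hK.cthickening r) isClosed_cthickening hx
  set z := (InnerProductSpace.toDual ℝ E).symm f
  have hfz : ∀ p, f p = ⟪z, p⟫ := fun p => InnerProductSpace.toDual_symm_apply.symm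
  have hmargin : ∀ q ∈ K, r * ‖z‖ < ⟪z, q - x⟫ := by
    intro q hq
    have hshift : q - r • ‖z‖⁻¹ • z ∈ cthickening r K := by
      refine mem_cthickening_of_dist_le _ q r K hq ?_
      rw [dist_self_sub_left, norm_smul, norm_smul, norm_inv, norm_norm, Real.norm_of_nonneg hr]
      exact mul_le_of_le_one_right hr (inv_mul_le_one_of_le₀ le_rfl (norm_nonneg z))
    have hnorm : ‖z‖⁻¹ * ‖z‖ ^ 2 = ‖z‖ := by rw [sq, ← mul_assoc, inv_mul_mul_self]
    have hsep := hfx.trans (hfC _ hshift)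
    rw [hfz, hfz, inner_sub_right, real_inner_smul_right, real_inner_smul_right,
      real_inner_self_eq_norm_sq, hnorm] at hsep
    rw [inner_sub_right]
    linarith
  have hz : z ≠ 0 := by
    intro hz
    obtain ⟨q, hq⟩ := hKne
    simpa [hz] using hmargin q hq
  have hz' : 0 < ‖z‖ := norm_pos_iff.2 hz
  refine ⟨‖z‖⁻¹ • z, by rw [norm_smul, norm_inv, norm_norm, inv_mul_cancel₀ hz'.ne'],
    fun q hq => ?_⟩
  rw [real_inner_smul_left, lt_inv_mul_iff₀ hz', mul_comm]
  exact hmargin q hq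

theorem exists_dist_eq_forall_dist_lt_of_notMem_convexHull [Nontrivial E] [CompleteSpace E]
    {R : ℝ} (hR : 0 < R) {S : Finset E} {x : E}
    (hx : x ∉ convexHull ℝ (⋃ v ∈ S, closedBall v (R / 2))) :
    ∃ y, dist x y = R ∧ ∀ v ∈ S, dist v y < dist v x := by
  rcases S.eq_empty_or_nonempty with rfl | hS
  · obtain ⟨u, hu⟩ := exists_norm_eq E hR.le
    exact ⟨x + u, by rw [dist_self_add_right, hu], by simp⟩
  rw [convexHull_biUnion_closedBall S (by positivity)] at hx
  obtain ⟨e, he, hsep⟩ := exists_norm_eq_one_lt_inner_of_notMem_cthickening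
    (convex_convexHull ℝ _) (Finset.coe_nonempty.2 hS).convexHull (by positivity) hx
  have hRe : ‖R • e‖ = R := by rw [norm_smul, he, mul_one, Real.norm_of_nonneg hR.le]
  refine ⟨x + R • e, by rw [dist_self_add_right, hRe], fun v hv => ?_⟩
  rw [dist_lt_dist_iff_inner_sub, add_sub_cancel_left, hRe, real_inner_smul_left]
  nlinarith [hsep v (subset_convexHull ℝ _ hv)]

end InnerProductSpace

section Capture

variable {V : Finset Plane} {w : Plane → ℝ} {R : ℝ}

theorem wcap_eq_sum_filter (V : Finset Plane) (w : Plane → ℝ) (x y : Plane) :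
    Wcap V w x y = ∑ v ∈ V with dist v y < dist v x, w v :=
  (Finset.sum_filter _ _).symm

theorem finite_image_wcap (x : Plane) (s : Set Plane) : (Wcap V w x '' s).Finite := by
  refine (V.powerset.image fun S => ∑ v ∈ S, w v).finite_toSet.subset ?_
  rintro _ ⟨y, -, rfl⟩
  simpa [wcap_eq_sum_filter] using ⟨_, Finset.filter_subset _ V, rfl⟩

theorem wcap_le_wstar {x y : Plane} (hy : R ≤ dist x y) : Wcap V w x y ≤ Wstar V w R x :=
  le_csSup (finite_image_wcap x _).bddAbove ⟨y, hy, rfl⟩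

theorem exists_wcap_eq_wstar (V : Finset Plane) (w : Plane → ℝ) (R : ℝ) (x : Plane) :
    ∃ y, R ≤ dist x y ∧ Wcap V w x y = Wstar V w R x := by
  obtain ⟨u, hu⟩ := exists_norm_eq Plane (le_max_right R 0)
  have hne : (Wcap V w x '' {y | R ≤ dist x y}).Nonempty :=
    ⟨_, x + u, show R ≤ dist x (x + u) by rw [dist_self_add_right, hu]; exact le_max_left R 0,
      rfl⟩
  exact hne.csSup_mem (finite_image_wcap x _)

theorem sum_le_wcap (hw : ∀ v ∈ V, 0 ≤ w v) {S : Finset Plane} (hS : S ⊆ V) {x y : Plane}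
    (hy : ∀ v ∈ S, dist v y < dist v x) : ∑ v ∈ S, w v ≤ Wcap V w x y := by
  rw [wcap_eq_sum_filter]
  exact Finset.sum_le_sum_of_subset_of_nonneg (fun v hv => Finset.mem_filter.2 ⟨hS hv, hy v hv⟩)
    fun v hv _ => hw v (Finset.mem_filter.1 hv).1

theorem mem_Iset_iff (hw : ∀ v ∈ V, 0 ≤ w v) (hR : 0 < R) (W' : ℝ) (x : Plane) :
    x ∈ Iset V w R W' ↔ Wstar V w R x < W' := by
  constructor
  · intro hx
    by_contra! hle
    obtain ⟨y, hy, hEq⟩ := exists_wcap_eq_wstar V w R x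
    set T := V.filter fun v => dist v y < dist v x
    have hT : W' ≤ ∑ v ∈ T, w v := by rw [← wcap_eq_sum_filter, hEq]; exact hle
    exact notMem_convexHull_biUnion_closedBall hR hy (fun v hv => (Finset.mem_filter.1 hv).2)
      (Set.mem_iInter₂.1 hx T ⟨Finset.filter_subset _ V, hT⟩)
  · intro hx
    refine Set.mem_iInter₂.2 fun S ⟨hSV, hWS⟩ => ?_
    by_contra hS
    obtain ⟨y, hy, hcap⟩ := exists_dist_eq_forall_dist_lt_of_notMem_convexHull hR hS
    linarith [sum_le_wcap hw hSV hcap, wcap_le_wstar (V := V) (w := w) hy.ge]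

end Capture

theorem stmt_5_general (V : Finset Plane) (w : Plane → ℝ) (hw : ∀ v ∈ V, 0 < w v)
    (R : ℝ) (hR : 0 < R) (W₀ : ℝ)
    (hne : (Iset V w R W₀).Nonempty)
    (hmin : ∀ W' ∈ {c : ℝ | ∃ x y : Plane, R ≤ dist x y ∧ c = Wcap V w x y},
      (Iset V w R W').Nonempty → W₀ ≤ W')
    (x : Plane) :
    (∀ x' : Plane, Wstar V w R x ≤ Wstar V w R x') ↔ x ∈ Iset V w R W₀ := by
  have hI : ∀ W' z, z ∈ Iset V w R W' ↔ Wstar V w R z < W' :=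
    mem_Iset_iff (fun v hv => (hw v hv).le) hR
  obtain ⟨x₀, hx₀⟩ := hne
  rw [hI] at hx₀ ⊢
  refine ⟨fun hx => (hx x₀).trans_lt hx₀, fun hx x' => ?_⟩
  by_contra! hlt
  obtain ⟨y, hy, hxy⟩ := exists_wcap_eq_wstar V w R x
  linarith [hmin _ ⟨x, y, hy, hxy.symm⟩ ⟨x', (hI _ x').2 hlt⟩]

/-- for the smallest attainable capture value `W₀` with `I(W₀)` nonempty,
a point is a `(1|1)_R`-centroid iff it belongs to `I(W₀)`. -/
theorem stmt_5 (V : Finset Plane) (w : Plane → ℝ) (hw : ∀ v ∈ V, 0 < w v)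
    (R : ℝ) (hR : 0 < R) (W₀ : ℝ)
    (hmem : W₀ ∈ {c : ℝ | ∃ x y : Plane, R ≤ dist x y ∧ c = Wcap V w x y})
    (hne : (Iset V w R W₀).Nonempty)
    (hmin : ∀ W' ∈ {c : ℝ | ∃ x y : Plane, R ≤ dist x y ∧ c = Wcap V w x y},
      (Iset V w R W').Nonempty → W₀ ≤ W')
    (x : Plane) :
    (∀ x' : Plane, Wstar V w R x ≤ Wstar V w R x') ↔ x ∈ Iset V w R W₀ :=
  stmt_5_general V w hw R hR W₀ hne hmin x
end
end

section
/- Let x be a point with wedge Wedge(x) defined as the intersection of the two closed half-planes H(F(x,θ_b), y(x,θ_b)) and H(F(x,θ_e), y(x,θ_e)), where θ_b, θ_e are the beginning and ending angles of the minimal open arc CA(x) covering MA(x), and assume CA(x) has span ≤ π. Then for every point x' ∉ Wedge(x), W*(x') ≥ W*(x). -/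
/-!
If `x'` lies outside the wedge, then `⟪x' - x, dir θ⟫ < 0` for `θ = θb` or `θ = θe`, and by
continuity also for all angles near it. Maximizing angles of `x` accumulate at both endpoints of
the arc, so one of them, `θ`, satisfies `⟪x' - x, dir θ⟫ < 0`: moving the leader from `x` to `x'`
goes away from the follower direction `θ`. Then every customer captured by `x + R • dir θ` from
`x` is also captured by `x' + R • dir θ` from `x'`, whence
`W*(x) = W(x, θ) ≤ W(x', θ) ≤ W*(x')`.
-/

open scoped RealInnerProductSpace

noncomputable section

section InnerProductSpace

variable {E : Type*} [NormedAddCommGroup E] [InnerProductSpace ℝ E]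

theorem dist_add_smul_lt_dist_iff {R : ℝ} (hR : 0 < R) {u : E} (hu : ‖u‖ = 1) (x v : E) :
    dist v (x + R • u) < dist v x ↔ R < 2 * ⟪v - x, u⟫ := by
  rw [← pow_lt_pow_iff_left₀ dist_nonneg dist_nonneg two_ne_zero, dist_eq_norm, dist_eq_norm,
    show v - (x + R • u) = (v - x) - R • u by abel, norm_sub_sq_real, real_inner_smul_right,
    norm_smul, Real.norm_eq_abs, abs_of_pos hR, hu]
  constructor <;> intro h <;> nlinarith

end InnerProductSpace

theorem norm_dir (θ : ℝ) : ‖dir θ‖ = 1 := by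
  simp [EuclideanSpace.norm_eq, dir, pt, Fin.sum_univ_two]

theorem inner_dir (u : Plane) (θ : ℝ) : ⟪u, dir θ⟫ = u 0 * Real.cos θ + u 1 * Real.sin θ := by
  simp [dir, pt, PiLp.inner_apply, Fin.sum_univ_two, mul_comm]

theorem continuous_inner_dir (u : Plane) : Continuous fun θ => ⟪u, dir θ⟫ := by
  simp only [inner_dir]
  fun_prop

theorem Wcap_le_Wcap {V : Finset Plane} {w : Plane → ℝ} (hw : ∀ v ∈ V, 0 ≤ w v)
    {x y x' y' : Plane} (h : ∀ v ∈ V, dist v y < dist v x → dist v y' < dist v x') :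
    Wcap V w x y ≤ Wcap V w x' y' := by
  refine Finset.sum_le_sum fun v hv => ?_
  by_cases hc : dist v y < dist v x
  · simp [hc, h v hv hc]
  · rw [if_neg hc]
    split_ifs
    exacts [hw v hv, le_rfl]

theorem Wcap_le_sum_abs (V : Finset Plane) (w : Plane → ℝ) (x y : Plane) :
    Wcap V w x y ≤ ∑ v ∈ V, |w v| :=
  Finset.sum_le_sum fun v _ => by split_ifs <;> simp [le_abs_self]

theorem Wang_le_Wang_of_inner_nonpos {V : Finset Plane} {w : Plane → ℝ}
    (hw : ∀ v ∈ V, 0 ≤ w v) {R : ℝ} (hR : 0 < R) {x x' : Plane} {θ : ℝ}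
    (h : ⟪x' - x, dir θ⟫ ≤ 0) : Wang V w R x θ ≤ Wang V w R x' θ := by
  refine Wcap_le_Wcap hw fun v _ hv => ?_
  rw [dist_add_smul_lt_dist_iff hR (norm_dir θ)] at hv ⊢
  have : ⟪v - x', dir θ⟫ = ⟪v - x, dir θ⟫ - ⟪x' - x, dir θ⟫ := by
    rw [← inner_sub_left, sub_sub_sub_cancel_right]
  linarith

theorem Wang_le_WstarC (V : Finset Plane) (w : Plane → ℝ) (R : ℝ) (x : Plane) (θ : ℝ) :
    Wang V w R x θ ≤ WstarC V w R x :=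
  le_csSup ⟨_, Set.forall_mem_range.2 fun _ => Wcap_le_sum_abs _ _ _ _⟩ ⟨θ, rfl⟩

/-- The set `MA(x)` of maximizing angles. -/
def maxAngles (V : Finset Plane) (w : Plane → ℝ) (R : ℝ) (x : Plane) : Set ℝ :=
  {θ | ∀ θ', Wang V w R x θ' ≤ Wang V w R x θ}

theorem WstarC_eq_of_mem_maxAngles {V : Finset Plane} {w : Plane → ℝ} {R : ℝ} {x : Plane}
    {θ : ℝ} (hθ : θ ∈ maxAngles V w R x) : WstarC V w R x = Wang V w R x θ :=
  le_antisymm (csSup_le (Set.range_nonempty _) (Set.forall_mem_range.2 hθ))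
    (Wang_le_WstarC V w R x θ)

theorem mem_closure_of_forall_exists_mem_Ioo_right {S : Set ℝ} {a : ℝ}
    (h : ∀ ε > (0 : ℝ), ∃ θ ∈ Set.Ioo a (a + ε), θ ∈ S) : a ∈ closure S :=
  Metric.mem_closure_iff.2 fun ε hε => by
    obtain ⟨θ, hθ, hS⟩ := h ε hε
    exact ⟨θ, hS, by rw [Real.dist_eq, abs_sub_lt_iff]; constructor <;> linarith [hθ.1, hθ.2]⟩

theorem mem_closure_of_forall_exists_mem_Ioo_left {S : Set ℝ} {a : ℝ}
    (h : ∀ ε > (0 : ℝ), ∃ θ ∈ Set.Ioo (a - ε) a, θ ∈ S) : a ∈ closure S :=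
  Metric.mem_closure_iff.2 fun ε hε => by
    obtain ⟨θ, hθ, hS⟩ := h ε hε
    exact ⟨θ, hS, by rw [Real.dist_eq, abs_sub_lt_iff]; constructor <;> linarith [hθ.1, hθ.2]⟩

theorem exists_mem_inner_dir_neg_of_mem_closure {S : Set ℝ} {a : ℝ} (ha : a ∈ closure S)
    {u : Plane} (hu : ⟪u, dir a⟫ < 0) : ∃ θ ∈ S, ⟪u, dir θ⟫ < 0 := by
  obtain ⟨θ, hθ, hS⟩ := mem_closure_iff.1 ha _ (isOpen_Iio.preimage (continuous_inner_dir u)) hu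
  exact ⟨θ, hS, hθ⟩

theorem stmt_12_general (V : Finset Plane) (w : Plane → ℝ) (hw : ∀ v ∈ V, 0 < w v)
    (R : ℝ) (hR : 0 < R) (x : Plane) (θb θe : ℝ)
    (hminb : ∀ ε > (0 : ℝ), ∃ θ ∈ Set.Ioo θb (θb + ε),
      ∀ θ' : ℝ, Wang V w R x θ' ≤ Wang V w R x θ)
    (hmine : ∀ ε > (0 : ℝ), ∃ θ ∈ Set.Ioo (θe - ε) θe,
      ∀ θ' : ℝ, Wang V w R x θ' ≤ Wang V w R x θ)
    (x' : Plane)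
    (hx' : ¬ (0 ≤ ⟪x' - x, dir θb⟫ ∧ 0 ≤ ⟪x' - x, dir θe⟫)) :
    WstarC V w R x ≤ WstarC V w R x' := by
  obtain ⟨θ, hmax, hneg⟩ : ∃ θ ∈ maxAngles V w R x, ⟪x' - x, dir θ⟫ < 0 := by
    rcases not_and_or.1 hx' with hb | he
    · exact exists_mem_inner_dir_neg_of_mem_closure
        (mem_closure_of_forall_exists_mem_Ioo_right hminb) (not_le.1 hb)
    · exact exists_mem_inner_dir_neg_of_mem_closure
        (mem_closure_of_forall_exists_mem_Ioo_left hmine) (not_le.1 he)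
  calc WstarC V w R x = Wang V w R x θ := WstarC_eq_of_mem_maxAngles hmax
    _ ≤ Wang V w R x' θ := Wang_le_Wang_of_inner_nonpos (fun v hv => (hw v hv).le) hR hneg.le
    _ ≤ WstarC V w R x' := Wang_le_WstarC V w R x' θ

/-- wedge pruning. With `θb, θe` the endpoints of the minimal open arc
`CA(x)` covering the maximizing angles (span at most `π`), every point outside
`Wedge(x)` has weight loss at least `W*(x)`. -/
theorem stmt_12 (V : Finset Plane) (w : Plane → ℝ) (hw : ∀ v ∈ V, 0 < w v)
    (R : ℝ) (hR : 0 < R) (x : Plane) (θb θe : ℝ)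
    (hlt : θb < θe) (hspan : θe - θb ≤ Real.pi)
    (hcover : ∀ θ : ℝ, (∀ θ' : ℝ, Wang V w R x θ' ≤ Wang V w R x θ) →
      ∃ k : ℤ, θ - 2 * Real.pi * k ∈ Set.Ioo θb θe)
    (hminb : ∀ ε > (0 : ℝ), ∃ θ ∈ Set.Ioo θb (θb + ε),
      ∀ θ' : ℝ, Wang V w R x θ' ≤ Wang V w R x θ)
    (hmine : ∀ ε > (0 : ℝ), ∃ θ ∈ Set.Ioo (θe - ε) θe,
      ∀ θ' : ℝ, Wang V w R x θ' ≤ Wang V w R x θ)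
    (x' : Plane)
    (hx' : ¬ (0 ≤ ⟪x' - x, dir θb⟫ ∧ 0 ≤ ⟪x' - x, dir θe⟫)) :
    WstarC V w R x ≤ WstarC V w R x' :=
  stmt_12_general V w hw R hR x θb θe hminb hmine x' hx'
end
end

section
/- Any point x outside the bounding box (the smallest axis-aligned rectangle containing all disks of radius R/2 around points of V) satisfies W*(x) = W(V), i.e., the follower can capture all customers. -/
open scoped RealInnerProductSpace

noncomputable section

/-
If `x` lies beyond the bounding box in some coordinate `i`, every customer `v` satisfies
`⟪v - x, u⟫ > R / 2` for the unit vector `u = ±eᵢ` pointing back towards the box. Moving the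
follower from `x` to `x + R • u` then brings it strictly closer to every customer, because
`‖v - (x + R • u)‖² = ‖v - x‖² - 2R⟪v - x, u⟫ + R²`; so this feasible position captures
everything, and no capture can exceed the total weight.
-/

section InnerProductSpace

variable {E : Type*} [NormedAddCommGroup E] [InnerProductSpace ℝ E]

theorem dist_add_lt_dist_iff (v x u : E) :
    dist v (x + u) < dist v x ↔ ‖u‖ ^ 2 < 2 * ⟪v - x, u⟫ := by
  rw [← sq_lt_sq₀ dist_nonneg dist_nonneg, dist_eq_norm, dist_eq_norm, sub_add_eq_sub_sub,
    norm_sub_sq_real]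
  constructor <;> intro h <;> linarith

theorem dist_add_smul_lt_dist {R : ℝ} (hR : 0 < R) {u : E} (hu : ‖u‖ = 1) {x v : E}
    (h : R / 2 < ⟪v - x, u⟫) : dist v (x + R • u) < dist v x := by
  rw [dist_add_lt_dist_iff, norm_smul, hu, real_inner_smul_right, Real.norm_of_nonneg hR.le]
  nlinarith

end InnerProductSpace

theorem EuclideanSpace.exists_unit_inner_sub_gt {ι : Type*} [Fintype ι] [DecidableEq ι]
    {V : Finset (EuclideanSpace ℝ ι)} {x : EuclideanSpace ℝ ι} {r : ℝ}
    (hx : ∃ i, (∀ v ∈ V, v i + r < x i) ∨ (∀ v ∈ V, x i < v i - r)) :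
    ∃ u : EuclideanSpace ℝ ι, ‖u‖ = 1 ∧ ∀ v ∈ V, r < ⟪v - x, u⟫ := by
  obtain ⟨i, hbelow | habove⟩ := hx
  · refine ⟨EuclideanSpace.single i (-1), by simp, fun v hv => ?_⟩
    simp only [EuclideanSpace.inner_single_right, PiLp.sub_apply, conj_trivial]
    linarith [hbelow v hv]
  · refine ⟨EuclideanSpace.single i 1, by simp, fun v hv => ?_⟩
    simp only [EuclideanSpace.inner_single_right, PiLp.sub_apply, conj_trivial]
    linarith [habove v hv]

section Capture

variable {V : Finset Plane} {w : Plane → ℝ}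

theorem Wcap_le_sum (hw : ∀ v ∈ V, 0 ≤ w v) (x y : Plane) : Wcap V w x y ≤ ∑ v ∈ V, w v :=
  Finset.sum_le_sum fun v hv => by split_ifs <;> simp [hw v hv]

theorem Wcap_eq_sum_of_forall_dist_lt {x y : Plane} (h : ∀ v ∈ V, dist v y < dist v x) :
    Wcap V w x y = ∑ v ∈ V, w v :=
  Finset.sum_congr rfl fun v hv => if_pos (h v hv)

theorem Wstar_eq_sum_of_forall_dist_lt (hw : ∀ v ∈ V, 0 ≤ w v) {R : ℝ} {x y : Plane}
    (hy : R ≤ dist x y) (h : ∀ v ∈ V, dist v y < dist v x) :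
    Wstar V w R x = ∑ v ∈ V, w v := by
  refine IsGreatest.csSup_eq ⟨⟨y, hy, Wcap_eq_sum_of_forall_dist_lt h⟩, ?_⟩
  rintro _ ⟨z, -, rfl⟩
  exact Wcap_le_sum hw x z

end Capture

/-- any point strictly outside the bounding box of the disks of radius
`R/2` around `V` has weight loss `W(V)`: some feasible follower position captures all
customers. -/
theorem stmt_15 (V : Finset Plane) (w : Plane → ℝ) (hw : ∀ v ∈ V, 0 < w v)
    (R : ℝ) (hR : 0 < R) (x : Plane)
    (hx : ∃ i : Fin 2, (∀ v ∈ V, v i + R / 2 < x i) ∨ (∀ v ∈ V, x i < v i - R / 2)) :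
    (∃ y : Plane, R ≤ dist x y ∧ ∀ v ∈ V, dist v y < dist v x) ∧
    Wstar V w R x = ∑ v ∈ V, w v := by
  obtain ⟨u, hu, hfar⟩ := EuclideanSpace.exists_unit_inner_sub_gt hx
  have hfeasible : R ≤ dist x (x + R • u) := by
    rw [dist_self_add_right, norm_smul, hu, Real.norm_of_nonneg hR.le, mul_one]
  have hcapture : ∀ v ∈ V, dist v (x + R • u) < dist v x :=
    fun v hv => dist_add_smul_lt_dist hR hu (hfar v hv)
  exact ⟨⟨x + R • u, hfeasible, hcapture⟩,
    Wstar_eq_sum_of_forall_dist_lt (fun v hv => (hw v hv).le) hfeasible hcapture⟩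
end
end
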